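/- Let P₁, P₂ be row-stochastic S×S matrices, each uniformly ergodic with common constants m ≥ 1, ρ ∈ (0,1) (so sup_s ‖P_i^t(s,·) − μ_i‖_TV ≤ m ρ^t), with stationary distributions μ₁, μ₂. Then ‖μ₁ − μ₂‖_TV ≤ σ ‖P₁ − P₂‖_TV, where σ = n̂ + m ρ^{n̂}/(1−ρ), n̂ = ⌈log_ρ(1/m)⌉, and ‖P₁−P₂‖_TV := sup_{‖q‖_TV=1} ‖Σ_s q(s)(P₁(s,·) − P₂(s,·))‖_TV. -/

import Mathlib

/-! With `v = μ₁ (P₁ - P₂)`, stationarity of `μ₁` under `P₁` telescopes to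
`μ₁ - μ₁ P₂ᵗ = ∑_{i<t} v P₂ⁱ`. Each term has `ℓ¹` norm at most `‖v‖₁ ≤ D`, because `P₂ⁱ` is
stochastic, and at most `m ρⁱ D`, because `v` sums to zero and the rows of `P₂ⁱ` are `m ρⁱ`-close
to `μ₂`. Using the first bound for `i < n` and the second beyond gives `(n + m ρⁿ / (1 - ρ)) D`
for every `n`, in particular for `n̂`; finally `μ₁ P₂ᵗ → μ₂` as `t → ∞`. -/

open Matrix Finset Filter

section L1Bounds

variable {S T : Type*} [Fintype S]

theorem sum_abs_vecMul_le [Fintype T] (x : S → ℝ) (A : Matrix S T ℝ) {c : ℝ}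
    (hA : ∀ s, ∑ z, |A s z| ≤ c) :
    ∑ z, |(x ᵥ* A) z| ≤ (∑ s, |x s|) * c :=
  calc ∑ z, |(x ᵥ* A) z|
      ≤ ∑ z, ∑ s, |x s| * |A s z| := by
        refine sum_le_sum fun z _ => (abs_sum_le_sum_abs _ _).trans_eq ?_
        simp only [abs_mul]
    _ = ∑ s, |x s| * ∑ z, |A s z| := by
        rw [sum_comm]; simp only [mul_sum]
    _ ≤ ∑ s, |x s| * c := sum_le_sum fun s _ => mul_le_mul_of_nonneg_left (hA s) (abs_nonneg _)
    _ = (∑ s, |x s|) * c := (sum_mul _ _ _).symm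

theorem vecMul_sub_replicateRow (x : S → ℝ) (A : Matrix S T ℝ) (π : T → ℝ) :
    x ᵥ* (A - replicateRow S π) = x ᵥ* A - (∑ s, x s) • π := by
  ext z
  simp [vecMul, dotProduct, mul_sub, sum_sub_distrib, sum_mul]

theorem sum_abs_vecMul_sub_smul_le [Fintype T] (x : S → ℝ) (A : Matrix S T ℝ) (π : T → ℝ) {c : ℝ}
    (hA : ∀ s, ∑ z, |A s z - π z| ≤ c) :
    ∑ z, |(x ᵥ* A - (∑ s, x s) • π) z| ≤ (∑ s, |x s|) * c := by
  rw [← vecMul_sub_replicateRow]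
  exact sum_abs_vecMul_le x _ fun s => by simpa using hA s

theorem sum_abs_vecMul_le_of_mem_rowStochastic [DecidableEq S] (x : S → ℝ) {M : Matrix S S ℝ}
    (hM : M ∈ rowStochastic ℝ S) :
    ∑ z, |(x ᵥ* M) z| ≤ ∑ s, |x s| := by
  refine (sum_abs_vecMul_le x M fun s => ?_).trans_eq (mul_one _)
  simp only [abs_of_nonneg (nonneg_of_mem_rowStochastic hM), sum_row_of_mem_rowStochastic hM s,
    le_refl]

theorem sum_abs_sum_apply_le {ι : Type*} (s : Finset ι) (f : ι → S → ℝ) :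
    ∑ z, |(∑ i ∈ s, f i) z| ≤ ∑ i ∈ s, ∑ z, |f i z| := by
  rw [sum_comm]
  exact sum_le_sum fun z _ => by simpa only [Finset.sum_apply] using abs_sum_le_sum_abs _ _

end L1Bounds

theorem sub_vecMul_pow_eq_sum {R S : Type*} [Ring R] [Fintype S] [DecidableEq S]
    (x : S → R) (Q : Matrix S S R) (t : ℕ) :
    x - x ᵥ* Q ^ t = ∑ i ∈ range t, (x - x ᵥ* Q) ᵥ* Q ^ i := by
  simp only [sub_vecMul, vecMul_vecMul, ← pow_succ']
  rw [sum_range_sub' (fun i => x ᵥ* Q ^ i), pow_zero, vecMul_one]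

theorem sum_range_le_of_le_of_le_geom {a : ℕ → ℝ} {D C ρ : ℝ} (hC : 0 ≤ C) (hρ₀ : 0 ≤ ρ)
    (hρ₁ : ρ < 1) (haD : ∀ i, a i ≤ D) (haC : ∀ i, a i ≤ C * ρ ^ i) {n t : ℕ} (hnt : n ≤ t) :
    ∑ i ∈ range t, a i ≤ n * D + C * ρ ^ n / (1 - ρ) := by
  rw [← sum_range_add_sum_Ico _ hnt]
  gcongr
  · simpa using sum_le_sum fun i (_ : i ∈ range n) => haD i
  · calc ∑ i ∈ Ico n t, a i
        ≤ C * ∑ i ∈ Ico n t, ρ ^ i := by rw [mul_sum]; exact sum_le_sum fun i _ => haC i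
      _ ≤ C * (ρ ^ n / (1 - ρ)) := by gcongr; exact geom_sum_Ico_le_of_lt_one hρ₀ hρ₁
      _ = C * ρ ^ n / (1 - ρ) := (mul_div_assoc _ _ _).symm

section Perturbation

variable {S : Type*} [Fintype S] [DecidableEq S] {P₁ P₂ : Matrix S S ℝ} {μ₁ μ₂ : S → ℝ}
  {m ρ D : ℝ}

theorem sum_abs_sub_vecMul_pow_le (hP₁ : P₁ *ᵥ 1 = 1) (hP₂ : P₂ ∈ rowStochastic ℝ S)
    (hμ₁ : μ₁ ᵥ* P₁ = μ₁) (hm : 0 ≤ m) (hρ₀ : 0 ≤ ρ) (hρ₁ : ρ < 1)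
    (herg : ∀ s t, ∑ z, |(P₂ ^ t) s z - μ₂ z| ≤ m * ρ ^ t)
    (hD : ∑ z, |(μ₁ ᵥ* (P₁ - P₂)) z| ≤ D) {n t : ℕ} (hnt : n ≤ t) :
    ∑ z, |μ₁ z - (μ₁ ᵥ* P₂ ^ t) z| ≤ (n + m * ρ ^ n / (1 - ρ)) * D := by
  set v := μ₁ ᵥ* (P₁ - P₂)
  have hv : μ₁ - μ₁ ᵥ* P₂ = v := by simp only [v, vecMul_sub, hμ₁]
  have hv_sum : ∑ s, v s = 0 := by
    rw [← dotProduct_one, ← dotProduct_mulVec, sub_mulVec, hP₁,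
      one_vecMul_of_mem_rowStochastic hP₂, sub_self, dotProduct_zero]
  have hD₀ : 0 ≤ D := (sum_nonneg fun z _ => abs_nonneg _).trans hD
  have hbound := sum_range_le_of_le_of_le_geom (a := fun i => ∑ z, |(v ᵥ* P₂ ^ i) z|)
    (mul_nonneg hm hD₀) hρ₀ hρ₁
    (fun i => (sum_abs_vecMul_le_of_mem_rowStochastic v (pow_mem hP₂ i)).trans hD)
    (fun i => by
      have := sum_abs_vecMul_sub_smul_le v (P₂ ^ i) μ₂ fun s => herg s i
      rw [hv_sum, zero_smul, sub_zero] at this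
      exact (this.trans (mul_le_mul_of_nonneg_right hD (by positivity))).trans_eq (by ring))
    hnt
  calc ∑ z, |μ₁ z - (μ₁ ᵥ* P₂ ^ t) z|
      = ∑ z, |(∑ i ∈ range t, v ᵥ* P₂ ^ i) z| := by
        rw [← hv, ← sub_vecMul_pow_eq_sum]; rfl
    _ ≤ ∑ i ∈ range t, ∑ z, |(v ᵥ* P₂ ^ i) z| := sum_abs_sum_apply_le _ _
    _ ≤ n * D + m * D * ρ ^ n / (1 - ρ) := hbound
    _ = (n + m * ρ ^ n / (1 - ρ)) * D := by ring

theorem sum_abs_sub_le_of_vecMul_eq_self (hP₁ : P₁ *ᵥ 1 = 1) (hP₂ : P₂ ∈ rowStochastic ℝ S)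
    (hμ₁nn : ∀ s, 0 ≤ μ₁ s) (hμ₁sum : ∑ s, μ₁ s = 1) (hμ₁ : μ₁ ᵥ* P₁ = μ₁) (hm : 0 ≤ m)
    (hρ₀ : 0 ≤ ρ) (hρ₁ : ρ < 1) (herg : ∀ s t, ∑ z, |(P₂ ^ t) s z - μ₂ z| ≤ m * ρ ^ t)
    (hD : ∑ z, |(μ₁ ᵥ* (P₁ - P₂)) z| ≤ D) (n : ℕ) :
    ∑ z, |μ₁ z - μ₂ z| ≤ (n + m * ρ ^ n / (1 - ρ)) * D := by
  have hμ₁norm : ∑ s, |μ₁ s| = 1 := by simpa only [abs_of_nonneg (hμ₁nn _)] using hμ₁sum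
  have hclose : ∀ t, ∑ z, |(μ₁ ᵥ* P₂ ^ t) z - μ₂ z| ≤ m * ρ ^ t := fun t => by
    simpa [hμ₁sum, hμ₁norm] using sum_abs_vecMul_sub_smul_le μ₁ (P₂ ^ t) μ₂ fun s => herg s t
  have hlim : Tendsto (fun t : ℕ => (n + m * ρ ^ n / (1 - ρ)) * D + m * ρ ^ t) atTop
      (nhds ((n + m * ρ ^ n / (1 - ρ)) * D)) := by
    simpa using ((tendsto_pow_atTop_nhds_zero_of_lt_one hρ₀ hρ₁).const_mul m).const_add _
  refine ge_of_tendsto hlim (eventually_atTop.2 ⟨n, fun t hnt => ?_⟩)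
  calc ∑ z, |μ₁ z - μ₂ z|
      ≤ ∑ z, (|μ₁ z - (μ₁ ᵥ* P₂ ^ t) z| + |(μ₁ ᵥ* P₂ ^ t) z - μ₂ z|) :=
        sum_le_sum fun z _ => abs_sub_le _ _ _
    _ ≤ _ := by
        rw [sum_add_distrib]
        exact add_le_add (sum_abs_sub_vecMul_pow_le hP₁ hP₂ hμ₁ hm hρ₀ hρ₁ herg hD hnt)
          (hclose t)

end Perturbation

theorem stationary_distribution_perturbation_general {S : Type*} [Fintype S] [DecidableEq S]
    (P₁ P₂ : Matrix S S ℝ)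
    (hP₁row : ∀ s, ∑ s', P₁ s s' = 1)
    (hP₂nn : ∀ s s', 0 ≤ P₂ s s') (hP₂row : ∀ s, ∑ s', P₂ s s' = 1)
    (m ρ : ℝ) (hm : 1 ≤ m) (hρ : ρ ∈ Set.Ioo (0 : ℝ) 1)
    (μ₁ μ₂ : S → ℝ)
    (hμ₁nn : ∀ s, 0 ≤ μ₁ s) (hμ₁sum : ∑ s, μ₁ s = 1)
    (hμ₁stat : ∀ z, ∑ s, μ₁ s * P₁ s z = μ₁ z)
    (herg₂ : ∀ (s : S) (t : ℕ), ∑ z, |(P₂ ^ t) s z - μ₂ z| ≤ m * ρ ^ t)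
    (D : ℝ)
    (hD : ∀ q : S → ℝ, ∑ s, |q s| = 1 →
      ∑ z, |∑ s, q s * (P₁ s z - P₂ s z)| ≤ D) :
    ∑ z, |μ₁ z - μ₂ z| ≤
      ((⌈Real.logb ρ m⁻¹⌉₊ : ℝ) +
        m * ρ ^ (⌈Real.logb ρ m⁻¹⌉₊ : ℕ) / (1 - ρ)) * D := by
  have hP₁ : P₁ *ᵥ 1 = 1 := funext fun s => by simpa [mulVec, dotProduct] using hP₁row s
  have hP₂ : P₂ ∈ rowStochastic ℝ S := mem_rowStochastic_iff_sum.2 ⟨hP₂nn, hP₂row⟩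
  have hμ₁norm : ∑ s, |μ₁ s| = 1 := by simpa only [abs_of_nonneg (hμ₁nn _)] using hμ₁sum
  exact sum_abs_sub_le_of_vecMul_eq_self hP₁ hP₂ hμ₁nn hμ₁sum (funext hμ₁stat) (by linarith)
    hρ.1.le hρ.2 herg₂ (hD μ₁ hμ₁norm) _

/-- Perturbation bound for stationary distributions of uniformly ergodic Markov
chains (Mitrophanov 2005, Cor. 3.1): `‖μ₁ - μ₂‖_TV ≤ σ ‖P₁ - P₂‖_TV`, where total
variation is the L¹ distance, `σ = n̂ + m ρ^n̂/(1-ρ)` and `n̂ = ⌈log_ρ(1/m)⌉`.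
The operator norm `‖P₁ - P₂‖_TV` is expressed via an arbitrary upper bound `D`
over all signed vectors `q` with `‖q‖₁ = 1`. -/
theorem stationary_distribution_perturbation {S : Type*} [Fintype S] [DecidableEq S]
    (P₁ P₂ : Matrix S S ℝ)
    (hP₁nn : ∀ s s', 0 ≤ P₁ s s') (hP₁row : ∀ s, ∑ s', P₁ s s' = 1)
    (hP₂nn : ∀ s s', 0 ≤ P₂ s s') (hP₂row : ∀ s, ∑ s', P₂ s s' = 1)
    (m ρ : ℝ) (hm : 1 ≤ m) (hρ : ρ ∈ Set.Ioo (0 : ℝ) 1)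
    (μ₁ μ₂ : S → ℝ)
    (hμ₁nn : ∀ s, 0 ≤ μ₁ s) (hμ₁sum : ∑ s, μ₁ s = 1)
    (hμ₂nn : ∀ s, 0 ≤ μ₂ s) (hμ₂sum : ∑ s, μ₂ s = 1)
    (hμ₁stat : ∀ z, ∑ s, μ₁ s * P₁ s z = μ₁ z)
    (hμ₂stat : ∀ z, ∑ s, μ₂ s * P₂ s z = μ₂ z)
    (herg₁ : ∀ (s : S) (t : ℕ), ∑ z, |(P₁ ^ t) s z - μ₁ z| ≤ m * ρ ^ t)
    (herg₂ : ∀ (s : S) (t : ℕ), ∑ z, |(P₂ ^ t) s z - μ₂ z| ≤ m * ρ ^ t)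
    (D : ℝ)
    (hD : ∀ q : S → ℝ, ∑ s, |q s| = 1 →
      ∑ z, |∑ s, q s * (P₁ s z - P₂ s z)| ≤ D) :
    ∑ z, |μ₁ z - μ₂ z| ≤
      ((⌈Real.logb ρ m⁻¹⌉₊ : ℝ) +
        m * ρ ^ (⌈Real.logb ρ m⁻¹⌉₊ : ℕ) / (1 - ρ)) * D :=
  stationary_distribution_perturbation_general P₁ P₂ hP₁row hP₂nn hP₂row m ρ hm hρ μ₁ μ₂ hμ₁nn
    hμ₁sum hμ₁stat herg₂ D hD
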